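/- Let X be a Banach space, let T = {T(t,s) : t, s > a₀} be an invertible evolution family on X, let h : (a₀,∞) → (0,∞) be a growth rate, and let a₀* > a₀. If T is h-expansive on [a₀*,∞) with constants L, β > 0, then T is uniformly h-noncritical on [a₀*,∞): for any C > 0 with θ := 2L e^{−βC} < 1, one has ‖v‖ ≤ θ sup{‖T(u,t)v‖ : |ln h(u) − ln h(t)| ≤ C} for all v ∈ X and all t with h(t) ≥ e^C h(a₀*). -/
import Mathlib


open Set Real

noncomputable section

variable {X : Type*} [NormedAddCommGroup X] [NormedSpace ℝ X] [CompleteSpace X]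

/-- An invertible evolution family on `X` with parameter `a₀ ∈ ℝ ∪ {-∞}` (modelled as
`EReal`), viewed as a two-parameter family `T t s` for all `t, s > a₀` (for `t < s`,
`T t s` is the inverse of `T s t`): `T t t = Id` for `t > a₀`; the two-sided cocycle
identity `T t s ∘ T s r = T t r` holds for all `t, s, r > a₀`; and for every `s > a₀`
and `v ∈ X`, the map `t ↦ T t s v` is continuous on `[s, ∞)`. -/
def IsInvertibleEvolutionFamily (a₀ : EReal) (T : ℝ → ℝ → X →L[ℝ] X) : Prop :=
  (∀ t : ℝ, a₀ < (t : EReal) → T t t = ContinuousLinearMap.id ℝ X) ∧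
  (∀ t s r : ℝ, a₀ < (t : EReal) → a₀ < (s : EReal) → a₀ < (r : EReal) →
    (T t s).comp (T s r) = T t r) ∧
  (∀ s : ℝ, a₀ < (s : EReal) → ∀ v : X, ContinuousOn (fun t => T t s v) (Set.Ici s))

/-- A growth rate: a bijective increasing map from `(a₀, ∞)` onto `(0, ∞)`. -/
def IsGrowthRate (a₀ : EReal) (h : ℝ → ℝ) : Prop :=
  StrictMonoOn h {t : ℝ | a₀ < (t : EReal)} ∧
  Set.BijOn h {t : ℝ | a₀ < (t : EReal)} (Set.Ioi (0 : ℝ))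

/-- `T` (with parameter `a₀`) is uniformly `h`-noncritical on `[a₀*, ∞)`: there are
`θ ∈ (0, 1)` and `C > 0` such that
`‖v‖ ≤ θ sup {‖T u t v‖ : |ln h(u) - ln h(t)| ≤ C}` for every `v ∈ X` and every `t` with
`h t ≥ e^C h(a₀*)`; the inequality against the supremum is expressed equivalently via
arbitrary upper bounds `M` of `{‖T u t v‖ : |ln h(u) - ln h(t)| ≤ C}`. -/
def UnifHNoncriticalOn (a₀ : EReal) (h : ℝ → ℝ) (T : ℝ → ℝ → X →L[ℝ] X)
    (astar : ℝ) : Prop :=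
  ∃ θ : ℝ, 0 < θ ∧ θ < 1 ∧ ∃ C : ℝ, 0 < C ∧
    ∀ (v : X) (t : ℝ), a₀ < (t : EReal) → Real.exp C * h astar ≤ h t →
      ∀ M : ℝ,
        (∀ u : ℝ, a₀ < (u : EReal) → |Real.log (h u) - Real.log (h t)| ≤ C →
          ‖T u t v‖ ≤ M) →
        ‖v‖ ≤ θ * M

/-- If an invertible evolution family `T` is `h`-expansive on `[a₀*, ∞)`
with constants `L, β > 0`, then `T` is uniformly `h`-noncritical on `[a₀*, ∞)`: for any
`C > 0` with `θ := 2 L e^{-β C} < 1` one has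
`‖v‖ ≤ θ sup {‖T u t v‖ : |ln h(u) - ln h(t)| ≤ C}` for all `v ∈ X` and all `t` with
`h t ≥ e^C h(a₀*)`. -/
theorem hExpansive_implies_unifHNoncritical
    (a₀ : EReal) (T : ℝ → ℝ → X →L[ℝ] X) (h : ℝ → ℝ) (astar : ℝ) (L β : ℝ)
    (hT : IsInvertibleEvolutionFamily a₀ T)
    (hh : IsGrowthRate a₀ h)
    (hastar : a₀ < (astar : EReal))
    (hL : 0 < L) (hβ : 0 < β)
    (hexp : ∀ (v : X) (a t b : ℝ), astar ≤ a → a ≤ t → t ≤ b →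
      ‖v‖ ≤ L * ((h t / h a) ^ (-β) * ‖T a t v‖ + (h b / h t) ^ (-β) * ‖T b t v‖)) :
    UnifHNoncriticalOn a₀ h T astar ∧
    ∀ C : ℝ, 0 < C → 2 * L * Real.exp (-β * C) < 1 →
      ∀ (v : X) (t : ℝ), a₀ < (t : EReal) → Real.exp C * h astar ≤ h t →
        ∀ M : ℝ,
          (∀ u : ℝ, a₀ < (u : EReal) → |Real.log (h u) - Real.log (h t)| ≤ C →
            ‖T u t v‖ ≤ M) →
          ‖v‖ ≤ 2 * L * Real.exp (-β * C) * M := by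
  obtain ⟨hmono, hbij⟩ := hh
  have hpos : ∀ t : ℝ, a₀ < (t : EReal) → 0 < h t := fun t ht => hbij.mapsTo ht
  have key : ∀ C : ℝ, 0 < C →
      ∀ (v : X) (t : ℝ), a₀ < (t : EReal) → Real.exp C * h astar ≤ h t →
        ∀ M : ℝ,
          (∀ u : ℝ, a₀ < (u : EReal) → |Real.log (h u) - Real.log (h t)| ≤ C →
            ‖T u t v‖ ≤ M) →
          ‖v‖ ≤ 2 * L * Real.exp (-β * C) * M := by
    intro C hC v t ht hth M hM
    have htpos : 0 < h t := hpos t ht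
    have hapos : 0 < h astar := hpos astar hastar
    obtain ⟨a, haS, hha⟩ := hbij.surjOn
      (show Real.exp (-C) * h t ∈ Set.Ioi (0:ℝ) from mul_pos (Real.exp_pos _) htpos)
    obtain ⟨b, hbS, hhb⟩ := hbij.surjOn
      (show Real.exp C * h t ∈ Set.Ioi (0:ℝ) from mul_pos (Real.exp_pos _) htpos)
    have haS' : a₀ < (a : EReal) := haS
    have hbS' : a₀ < (b : EReal) := hbS
    have hapos' : 0 < h a := hpos a haS'
    have hbpos' : 0 < h b := hpos b hbS'
    -- astar ≤ a
    have hastar_le : h astar ≤ h a := by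
      rw [hha]
      calc h astar = Real.exp (-C) * (Real.exp C * h astar) := by
            rw [← mul_assoc, ← Real.exp_add]; simp
        _ ≤ Real.exp (-C) * h t := by
            exact mul_le_mul_of_nonneg_left hth (Real.exp_pos _).le
    have hastar_a : astar ≤ a := by
      by_contra hlt
      push_neg at hlt
      exact absurd (hmono haS hastar hlt) (not_lt.2 hastar_le)
    -- a ≤ t
    have hat : a ≤ t := by
      by_contra hlt
      push_neg at hlt
      have := hmono ht haS hlt
      rw [hha] at this
      nlinarith [Real.exp_lt_one_iff.2 (neg_neg_iff_pos.2 hC : -C < 0)]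
    -- t ≤ b
    have htb : t ≤ b := by
      by_contra hlt
      push_neg at hlt
      have := hmono hbS ht hlt
      rw [hhb] at this
      nlinarith [Real.add_one_le_exp C]
    -- ratios
    have hrat_a : h t / h a = Real.exp C := by
      rw [hha, Real.exp_neg]
      field_simp
    have hrat_b : h b / h t = Real.exp C := by
      rw [hhb]
      field_simp
    have hrpow : (Real.exp C) ^ (-β) = Real.exp (-β * C) := by
      rw [← Real.exp_mul]; ring_nf
    -- log bounds
    have hMa : ‖T a t v‖ ≤ M := by
      apply hM a haS'
      rw [hha, Real.log_mul (Real.exp_ne_zero _) (ne_of_gt htpos), Real.log_exp]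
      simp [abs_of_nonneg hC.le]
    have hMb : ‖T b t v‖ ≤ M := by
      apply hM b hbS'
      rw [hhb, Real.log_mul (Real.exp_ne_zero _) (ne_of_gt htpos), Real.log_exp]
      simp [abs_of_nonneg hC.le]
    have hbound := hexp v a t b hastar_a hat htb
    rw [hrat_a, hrat_b, hrpow] at hbound
    have hex : (0:ℝ) < Real.exp (-β * C) := Real.exp_pos _
    have h1 := mul_le_mul_of_nonneg_left hMa (mul_pos hL hex).le
    have h2 := mul_le_mul_of_nonneg_left hMb (mul_pos hL hex).le
    nlinarith [norm_nonneg (T a t v), norm_nonneg (T b t v)]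
  constructor
  · set C₀ : ℝ := max 1 ((Real.log (2 * L) + 1) / β) with hC₀def
    have hC₀pos : 0 < C₀ := lt_of_lt_of_le one_pos (le_max_left _ _)
    have hθpos : 0 < 2 * L * Real.exp (-β * C₀) := by positivity
    have hθlt : 2 * L * Real.exp (-β * C₀) < 1 := by
      have h1 : Real.log (2 * L) + 1 ≤ β * C₀ := by
        have := le_max_right 1 ((Real.log (2 * L) + 1) / β)
        calc Real.log (2 * L) + 1 = β * ((Real.log (2 * L) + 1) / β) := by
              field_simp
          _ ≤ β * C₀ := mul_le_mul_of_nonneg_left this hβ.le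
      have h2 : Real.exp (-β * C₀) < Real.exp (-Real.log (2 * L)) := by
        apply Real.exp_lt_exp.2
        nlinarith
      have h3 : Real.exp (-Real.log (2 * L)) = (2 * L)⁻¹ := by
        rw [Real.exp_neg, Real.exp_log (by linarith)]
      calc 2 * L * Real.exp (-β * C₀) < 2 * L * (2 * L)⁻¹ := by
            rw [← h3]; exact mul_lt_mul_of_pos_left h2 (by linarith)
        _ = 1 := by field_simp
    exact ⟨2 * L * Real.exp (-β * C₀), hθpos, hθlt, C₀, hC₀pos, key C₀ hC₀pos⟩
  · intro C hC _ v t ht hth M hM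
    exact key C hC v t ht hth M hM
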